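/- Let Λ = ℚ[p_1, p_2, …] be the polynomial ring over ℚ in countably many variables p_k indexed by positive integers. Define h_m ∈ Λ by h_0 = 1 and m·h_m = Σ_{i=1}^m p_i·h_{m−i} for m ≥ 1; let D_1 be the unique ℚ-linear derivation of Λ with D_1(p_k) = k for all k ≥ 1; and for r ∈ ℕ let ε_r : Λ → ℚ be the ℚ-algebra homomorphism with ε_r(p_k) = r. Then for all h ≥ 1, m ≥ 0 and r ≥ 1, ε_r(D_1^h(h_m)) = C(r+m−1, r+h−1), where C(·,·) is the binomial coefficient. -/

import Mathlib

/-!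
Newton's identity `m h_m = ∑ p_i h_{m-i}` and `D_1 p_i = i` give, by strong induction,
`D_1 h_m = h_0 + ⋯ + h_{m-1}`: the terms `p_i D_1 h_{m-i}` reassemble into `∑_{k<m} k h_k`
and the terms `i h_{m-i}` supply the missing weights `m - k`. Applying `ε_r` to Newton's identity
gives `m ε_r(h_m) = r ∑_{j<m} ε_r(h_j)`, solved by `C(r+m-1, r-1)`. Each application of `D_1`
is then one hockey-stick step `∑_{j<m} C(r-1+j, k) = C(r-1+m, k+1)`.
-/

open MvPolynomial

/-- The derivation `D_1` of `Λ = ℚ[p_1, p_2, …]` with `D_1(p_k) = k` for all `k ≥ 1`. -/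
noncomputable def D1 : Derivation ℚ (MvPolynomial ℕ+ ℚ) (MvPolynomial ℕ+ ℚ) :=
  mkDerivation ℚ fun k : ℕ+ => C (((k : ℕ) : ℚ))

/-- The `ℚ`-algebra homomorphism `ε_r : Λ → ℚ` with `ε_r(p_k) = r` for all `k ≥ 1`. -/
noncomputable def epsHom (r : ℚ) : MvPolynomial ℕ+ ℚ →ₐ[ℚ] ℚ :=
  aeval fun _ : ℕ+ => r

open Finset

lemma D1_X (k : ℕ+) : D1 (X k) = C ((k : ℕ) : ℚ) := mkDerivation_X _ _ _

lemma epsHom_X (r : ℚ) (k : ℕ+) : epsHom r (X k) = r := aeval_X _ _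

lemma Finset.sum_range_sub_succ {M : Type*} [AddCommMonoid M] (f : ℕ → M) (m : ℕ) :
    ∑ i ∈ range m, f (m - (i + 1)) = ∑ i ∈ range m, f i := by
  simpa only [Nat.sub_sub, Nat.add_comm 1] using sum_range_reflect f m

lemma Finset.sum_range_mul_sum_range_sub {R : Type*} [NonUnitalNonAssocSemiring R] (x a : ℕ → R)
    (m : ℕ) :
    ∑ i ∈ range m, x i * ∑ j ∈ range (m - (i + 1)), a j =
      ∑ k ∈ range m, ∑ i ∈ range k, x i * a (k - (i + 1)) := by
  induction m with
  | zero => simp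
  | succ m ih =>
    have split : ∀ i ∈ range m, x i * ∑ j ∈ range (m + 1 - (i + 1)), a j =
        x i * ∑ j ∈ range (m - (i + 1)), a j + x i * a (m - (i + 1)) := by
      intro i hi
      rw [← mul_add, ← sum_range_succ]
      have := mem_range.mp hi
      congr 3
      omega
    rw [sum_range_succ, Nat.sub_self, sum_range_zero, mul_zero, add_zero, sum_congr rfl split,
      sum_add_distrib, ih, sum_range_succ]

lemma Nat.sum_range_add_choose_of_le {s k : ℕ} (hk : s ≤ k) (m : ℕ) :
    ∑ j ∈ range m, (s + j).choose k = (s + m).choose (k + 1) := by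
  induction m with
  | zero => simp [Nat.choose_eq_zero_of_lt (Nat.lt_succ_of_le hk)]
  | succ m ih => rw [sum_range_succ, ih, ← Nat.add_assoc, Nat.choose_succ_succ', Nat.add_comm]

/-- `H m` is the complete homogeneous symmetric function `h_m`, characterised through Newton's
identity in terms of the power sums `p_k = X k`. -/
structure IsCompleteHomogeneous (H : ℕ → MvPolynomial ℕ+ ℚ) : Prop where
  zero : H 0 = 1
  newton : ∀ m : ℕ, (m : ℚ) • H m = ∑ i ∈ range m, X i.succPNat * H (m - (i + 1))

namespace IsCompleteHomogeneous

variable {H : ℕ → MvPolynomial ℕ+ ℚ}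

lemma of_pos (H0 : H 0 = 1)
    (Hrec : ∀ m : ℕ, 1 ≤ m → (m : ℚ) • H m =
      ∑ i ∈ range m, X i.succPNat * H (m - (i + 1))) :
    IsCompleteHomogeneous H where
  zero := H0
  newton m := by
    rcases m.eq_zero_or_pos with rfl | hm
    · simp
    · exact Hrec m hm

lemma D1_eq_sum (hH : IsCompleteHomogeneous H) (m : ℕ) :
    D1 (H m) = ∑ j ∈ range m, H j := by
  induction m using Nat.strong_induction_on with
  | _ m ih =>
  rcases m.eq_zero_or_pos with rfl | hm
  · simp [hH.zero]
  refine smul_right_injective _ (Nat.cast_ne_zero.mpr hm.ne' : (m : ℚ) ≠ 0) ?_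
  have leibniz : ∀ i ∈ range m, D1 (X i.succPNat * H (m - (i + 1))) =
      X i.succPNat * ∑ j ∈ range (m - (i + 1)), H j + ((i + 1 : ℕ) : ℚ) • H (m - (i + 1)) := by
    intro i hi
    rw [Derivation.leibniz, D1_X, ih _ (by omega), smul_eq_mul, smul_eq_mul, Nat.succPNat_coe,
      mul_comm (H _), ← smul_eq_C_mul]
  have weights : ∀ i ∈ range m, (m : ℚ) • H (m - (i + 1)) =
      ((m - (i + 1) : ℕ) : ℚ) • H (m - (i + 1)) + ((i + 1 : ℕ) : ℚ) • H (m - (i + 1)) := by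
    intro i hi
    rw [← add_smul, ← Nat.cast_add, Nat.sub_add_cancel (mem_range.mp hi)]
  calc (m : ℚ) • D1 (H m)
      = ∑ i ∈ range m, D1 (X i.succPNat * H (m - (i + 1))) := by
        rw [← D1.map_smul, hH.newton, map_sum]
    _ = ∑ k ∈ range m, (k : ℚ) • H k + ∑ i ∈ range m, ((i + 1 : ℕ) : ℚ) • H (m - (i + 1)) := by
        rw [sum_congr rfl leibniz, sum_add_distrib, sum_range_mul_sum_range_sub]
        congr 1
        exact sum_congr rfl fun k _ => (hH.newton k).symm
    _ = (m : ℚ) • ∑ j ∈ range m, H j := by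
        rw [smul_sum, ← sum_range_sub_succ fun j => (m : ℚ) • H j, sum_congr rfl weights,
          sum_add_distrib, sum_range_sub_succ fun k => (k : ℚ) • H k]

lemma epsHom_eq_choose (hH : IsCompleteHomogeneous H) (s m : ℕ) :
    epsHom ((s + 1 : ℕ) : ℚ) (H m) = (s + m).choose s := by
  induction m using Nat.strong_induction_on with
  | _ m ih =>
  rcases m.eq_zero_or_pos with rfl | hm
  · simp [hH.zero]
  refine mul_left_cancel₀ (Nat.cast_ne_zero.mpr hm.ne' : (m : ℚ) ≠ 0) ?_
  have newton := congrArg (epsHom ((s + 1 : ℕ) : ℚ)) (hH.newton m)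
  simp only [map_smul, map_sum, map_mul, epsHom_X, smul_eq_mul, ← mul_sum] at newton
  rw [sum_range_sub_succ fun j => epsHom ((s + 1 : ℕ) : ℚ) (H j)] at newton
  rw [newton, sum_congr rfl fun j hj => ih j (mem_range.mp hj),
    ← Nat.cast_sum, Nat.sum_range_add_choose_of_le le_rfl]
  have absorption : (s + 1) * (s + m).choose (s + 1) = m * (s + m).choose s := by
    rw [mul_comm, Nat.choose_succ_right_eq, Nat.add_sub_cancel_left, mul_comm]
  exact_mod_cast absorption

lemma epsHom_D1_pow_eq_choose (hH : IsCompleteHomogeneous H) (s h m : ℕ) :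
    epsHom ((s + 1 : ℕ) : ℚ) ((D1.toLinearMap ^ h) (H m)) = (s + m).choose (s + h) := by
  induction h generalizing m with
  | zero => exact hH.epsHom_eq_choose s m
  | succ h ih =>
    rw [pow_succ, Module.End.mul_apply, Derivation.coeFn_coe, hH.D1_eq_sum, map_sum,
      map_sum, sum_congr rfl fun j _ => ih j, ← Nat.cast_sum,
      Nat.sum_range_add_choose_of_le (Nat.le_add_right s h), Nat.add_assoc]

end IsCompleteHomogeneous

theorem stmt12_general (H : ℕ → MvPolynomial ℕ+ ℚ) (H0 : H 0 = 1)
    (Hrec : ∀ m : ℕ, 1 ≤ m → (m : ℚ) • H m =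
      ∑ i ∈ Finset.range m, X i.succPNat * H (m - (i + 1)))
    (h m r : ℕ) (hr : 1 ≤ r) :
    epsHom (r : ℚ) ((D1.toLinearMap ^ h) (H m)) = ((r + m - 1).choose (r + h - 1) : ℚ) := by
  obtain ⟨s, rfl⟩ : ∃ s, r = s + 1 := ⟨r - 1, by omega⟩
  rw [show s + 1 + m - 1 = s + m by omega, show s + 1 + h - 1 = s + h by omega]
  exact (IsCompleteHomogeneous.of_pos H0 Hrec).epsHom_D1_pow_eq_choose s h m

/-- If `h_0 = 1` and `m·h_m = Σ_{i=1}^m p_i·h_{m-i}` for `m ≥ 1`, then for all `h ≥ 1`,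
`m ≥ 0`, `r ≥ 1`, `ε_r(D_1^h(h_m)) = C(r+m-1, r+h-1)`. -/
theorem stmt12 (H : ℕ → MvPolynomial ℕ+ ℚ) (H0 : H 0 = 1)
    (Hrec : ∀ m : ℕ, 1 ≤ m → (m : ℚ) • H m =
      ∑ i ∈ Finset.range m, X i.succPNat * H (m - (i + 1)))
    (h m r : ℕ) (hh : 1 ≤ h) (hr : 1 ≤ r) :
    epsHom (r : ℚ) ((D1.toLinearMap ^ h) (H m)) = ((r + m - 1).choose (r + h - 1) : ℚ) :=
  stmt12_general H H0 Hrec h m r hr
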